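/- Let C be a locally noetherian Grothendieck category, L a stable localizing subcategory, and q : C → C/L the quotient functor. Then q restricts to an equivalence between the full subcategory of injective objects of C having no nonzero subobject in L and the full subcategory of injective objects of C/L. -/

import Mathlib

open CategoryTheory Limits

universe w v u u₂ u₃ u₄ u₅

namespace CentralSheaf

variable {C : Type u} [Category.{v} C] [Abelian C]

/-- A monomorphism is essential if every morphism whose precomposition with it
is a monomorphism is itself a monomorphism. -/
def IsEssentialMono {X Y : C} (f : X ⟶ Y) : Prop :=
  Mono f ∧ ∀ ⦃Z : C⦄ (g : Y ⟶ Z), Mono (f ≫ g) → Mono g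

/-- A Serre subcategory of an abelian category, given as a predicate on objects:
it contains the zero objects and is closed under isomorphisms, subobjects,
quotient objects and extensions. -/
structure IsSerre (P : C → Prop) : Prop where
  zero : ∀ X : C, IsZero X → P X
  iso : ∀ {X Y : C}, (X ≅ Y) → P X → P Y
  sub : ∀ {X Y : C} (f : X ⟶ Y), Mono f → P Y → P X
  quot : ∀ {X Y : C} (f : X ⟶ Y), Epi f → P X → P Y
  ext : ∀ S : ShortComplex C, S.ShortExact → P S.X₁ → P S.X₃ → P S.X₂

/-- A localizing subcategory: a Serre subcategory closed under arbitrary direct sums. -/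
structure IsLocalizing (P : C → Prop) extends IsSerre P : Prop where
  sums : ∀ {ι : Type v} (X : ι → C) (c : Cofan X), IsColimit c → (∀ i, P (X i)) → P c.pt

/-- Stability: closure under essential extensions. -/
def IsStable (P : C → Prop) : Prop :=
  ∀ {X Y : C} (f : X ⟶ Y), IsEssentialMono f → P X → P Y

/-- A stable localizing subcategory. -/
structure IsStableLocalizing (P : C → Prop) extends IsLocalizing P : Prop where
  stable : IsStable P

/-- Data exhibiting `D` as the Gabriel quotient `C/P` of `C` by the localizing
subcategory `P`: an exact quotient functor `T` with fully faithful right adjoint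
(section functor) `S`, whose kernel is exactly `P`. -/
structure QuotientData (P : C → Prop) (D : Type u₂) [Category.{v} D] [Abelian D] where
  T : C ⥤ D
  S : D ⥤ C
  adj : T ⊣ S
  additive : T.Additive
  preservesFiniteLimits : PreservesFiniteLimits T
  fullS : S.Full
  faithfulS : S.Faithful
  ker : ∀ X : C, P X ↔ IsZero (T.obj X)

/-- `t` is the `P`-torsion subobject of its ambient object: it lies in `P` and
contains every subobject lying in `P`. -/
def IsTorsionSubobject (P : C → Prop) {X : C} (t : Subobject X) : Prop :=
  P ((t : C)) ∧ ∀ s : Subobject X, P ((s : C)) → s ≤ t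

/-- `P₃` is the smallest localizing subcategory containing `P₁` and `P₂`. -/
def IsJoin (P₁ P₂ P₃ : C → Prop) : Prop :=
  IsLocalizing P₃ ∧ (∀ X, P₁ X → P₃ X) ∧ (∀ X, P₂ X → P₃ X) ∧
    ∀ Q : C → Prop, IsLocalizing Q → (∀ X, P₁ X → Q X) → (∀ X, P₂ X → Q X) →
      ∀ X, P₃ X → Q X

/-- An object is noetherian if its subobjects satisfy the ascending chain condition. -/
def IsNoetherianObject (X : C) : Prop := WellFoundedGT (Subobject X)

/-- A Grothendieck category is locally noetherian if it has a (separating) set of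
noetherian generators. -/
def IsLocallyNoetherian (C : Type u) [Category.{v} C] [Abelian C] : Prop :=
  ∃ 𝒢 : Set C, ObjectProperty.IsSeparating 𝒢 ∧ ∀ G ∈ 𝒢, IsNoetherianObject G

/-! For a torsion-free injective `X`, the kernel of the unit `η : X ⟶ S (T X)` lies in `P`
because `T η` is invertible, so `η` is a monomorphism and, `X` being injective, has a
retraction `r`. A morphism into an object `S Y` is determined by its image under `T`
(adjunction), and `T (r ≫ η) = 𝟙`; hence `η` is an isomorphism, i.e. `X` is `P`-closed.
Consequently `T` is fully faithful on torsion-free injectives and sends them to injectives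
(`S (T X) ≅ X` is injective and `S` is fully faithful). Conversely an injective `Y` of the
quotient is `T (S Y)`, where `S Y` is injective because `S` is right adjoint to the exact
`T`, and torsion-free because `Hom(Z, S Y) ≅ Hom(T Z, Y) = 0` for `Z` in `P`. -/

theorem _root_.CategoryTheory.Adjunction.map_bijective_of_isIso_unit_app
    {C : Type u} [Category.{v} C] {D : Type u₂} [Category.{w} D] {L : C ⥤ D} {R : D ⥤ C}
    (adj : L ⊣ R) (A B : C)
    [IsIso (adj.unit.app B)] : Function.Bijective (L.map : (A ⟶ B) → (L.obj A ⟶ L.obj B)) := by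
  refine (Function.Bijective.of_comp_iff' (adj.homEquiv A (L.obj B)).bijective _).mp ?_
  have : (adj.homEquiv A (L.obj B)) ∘ L.map = fun f => f ≫ adj.unit.app B := by
    funext f
    simp [Adjunction.homEquiv_unit]
  rw [this]
  exact ⟨fun f g h => (cancel_mono _).mp h, fun g => ⟨g ≫ inv (adj.unit.app B), by simp⟩⟩

section Quotient

variable {C : Type u} [Category.{v} C] [Abelian C]
variable {D : Type u₂} [Category.{v} D] [Abelian D]

abbrev IsTorsionFree (P : C → Prop) (X : C) : Prop :=
  ∀ s : Subobject X, P (s : C) → IsZero (s : C)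

variable {P : C → Prop} (Q : QuotientData P D)

namespace QuotientData

instance : Q.T.Additive := Q.additive
instance : PreservesFiniteLimits Q.T := Q.preservesFiniteLimits
instance : Q.S.Full := Q.fullS
instance : Q.S.Faithful := Q.faithfulS
instance : Q.T.PreservesMonomorphisms := by
  have : PreservesLimitsOfShape WalkingCospan Q.T := inferInstance
  infer_instance

lemma hom_ext_of_map_eq {A : C} {Y : D} {f g : A ⟶ Q.S.obj Y}
    (h : Q.T.map f = Q.T.map g) : f = g :=
  (Q.adj.homEquiv A Y).symm.injective (by simp [Adjunction.homEquiv_counit, h])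

lemma eq_zero_of_mem {Z : C} {Y : D} (f : Z ⟶ Q.S.obj Y) (hZ : P Z) : f = 0 :=
  Q.hom_ext_of_map_eq (((Q.ker Z).1 hZ).eq_of_src _ _)

lemma isTorsionFree_S_obj (Y : D) : IsTorsionFree P (Q.S.obj Y) :=
  fun s hs => IsZero.of_mono_eq_zero s.arrow (Q.eq_zero_of_mem _ hs)

lemma mem_kernelSubobject_of_mono_map {X Y : C} (f : X ⟶ Y) [Mono (Q.T.map f)] :
    P (kernelSubobject f : C) := by
  refine (Q.ker _).2 (IsZero.of_mono_eq_zero (Q.T.map (kernelSubobject f).arrow) ?_)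
  rw [← cancel_mono (Q.T.map f), ← Q.T.map_comp, kernelSubobject_arrow_comp, Q.T.map_zero,
    zero_comp]

lemma mono_of_mono_map {X Y : C} (hX : IsTorsionFree P X) (f : X ⟶ Y) [Mono (Q.T.map f)] :
    Mono f := by
  refine Preadditive.mono_of_cancel_zero f fun g hg => ?_
  rw [← factorThruKernelSubobject_comp_arrow f g hg,
    (hX _ (Q.mem_kernelSubobject_of_mono_map f)).eq_of_tgt (factorThruKernelSubobject f g hg) 0,
    zero_comp]

lemma isIso_unit_app {X : C} (hinj : Injective X) (hX : IsTorsionFree P X) :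
    IsIso (Q.adj.unit.app X) := by
  have : Mono (Q.adj.unit.app X) := Q.mono_of_mono_map hX _
  obtain ⟨r, hr⟩ := hinj.factors (𝟙 X) (Q.adj.unit.app X)
  refine ⟨r, hr, Q.hom_ext_of_map_eq ?_⟩
  rw [← cancel_epi (Q.T.map (Q.adj.unit.app X)), ← Q.T.map_comp, ← Q.T.map_comp,
    reassoc_of% hr, Category.comp_id]

lemma injective_T_obj {X : C} (hinj : Injective X) (hX : IsTorsionFree P X) :
    Injective (Q.T.obj X) :=
  have := Q.isIso_unit_app hinj hX
  Q.adj.injective_of_map_injective _ (hinj.of_iso (asIso (Q.adj.unit.app X)))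

def injectiveRestriction :
    ObjectProperty.FullSubcategory (fun X : C => Injective X ∧ IsTorsionFree P X) ⥤
      ObjectProperty.FullSubcategory (fun Y : D => Injective Y) :=
  ObjectProperty.lift _ (ObjectProperty.ι _ ⋙ Q.T)
    fun A => Q.injective_T_obj A.property.1 A.property.2

lemma T_map_bijective (X : C) {Y : C} (hinj : Injective Y) (hY : IsTorsionFree P Y) :
    Function.Bijective (Q.T.map : (X ⟶ Y) → _) :=
  have := Q.isIso_unit_app hinj hY
  Q.adj.map_bijective_of_isIso_unit_app X Y

instance : Q.injectiveRestriction.Faithful where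
  map_injective {_ B} _ _ h := ObjectProperty.hom_ext _
    ((Q.T_map_bijective _ B.property.1 B.property.2).1 congr(($h).hom))

instance : Q.injectiveRestriction.Full where
  map_surjective {_ B} g :=
    have ⟨f, hf⟩ := (Q.T_map_bijective _ B.property.1 B.property.2).2 g.hom
    ⟨ObjectProperty.homMk f, ObjectProperty.hom_ext _ hf⟩

instance : Q.injectiveRestriction.EssSurj where
  mem_essImage Y :=
    have e : Q.T.obj (Q.S.obj Y.obj) ≅ Y.obj := asIso (Q.adj.counit.app Y.obj)
    ⟨⟨Q.S.obj Y.obj, Q.adj.map_injective _ Y.property, Q.isTorsionFree_S_obj _⟩,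
      ⟨ObjectProperty.isoMk _ e⟩⟩

end QuotientData

end Quotient

theorem quotient_restricts_to_equivalence_on_injectives_general
    {D : Type u₂} [Category.{v} D] [Abelian D]
    (P : C → Prop) (Q : QuotientData P D) :
    ∃ F : ObjectProperty.FullSubcategory (fun X : C => Injective X ∧
        ∀ s : Subobject X, P ((s : C)) → IsZero ((s : C))) ⥤
      ObjectProperty.FullSubcategory (fun Y : D => Injective Y),
      Nonempty (ObjectProperty.ι _ ⋙ Q.T ≅
        F ⋙ ObjectProperty.ι _) ∧ F.IsEquivalence :=
  ⟨Q.injectiveRestriction, ⟨(ObjectProperty.liftCompιIso _ _ _).symm⟩, { }⟩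

/-- Let `C` be a locally noetherian Grothendieck category, `L`
a stable localizing subcategory and `q : C → C/L` the quotient functor. Then
`q` restricts to an equivalence between the full subcategory of injective
objects of `C` with no nonzero subobject in `L` and the full subcategory of
injective objects of `C/L`. -/
theorem quotient_restricts_to_equivalence_on_injectives
    [HasColimits C] [AB5 C] (hln : IsLocallyNoetherian C)
    {D : Type u₂} [Category.{v} D] [Abelian D]
    (P : C → Prop) (hP : IsStableLocalizing P) (Q : QuotientData P D) :
    ∃ F : ObjectProperty.FullSubcategory (fun X : C => Injective X ∧
        ∀ s : Subobject X, P ((s : C)) → IsZero ((s : C))) ⥤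
      ObjectProperty.FullSubcategory (fun Y : D => Injective Y),
      Nonempty (ObjectProperty.ι _ ⋙ Q.T ≅
        F ⋙ ObjectProperty.ι _) ∧ F.IsEquivalence :=
  quotient_restricts_to_equivalence_on_injectives_general P Q

end CentralSheaf
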